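/- arXiv:1610.03515 — 3 statements merged into one kernel-verified Lean document; each statement's English description precedes it below -/
import Mathlib

section
/- Generalized Lax–Milgram (Babuška) theorem: for every bounded conjugate-linear functional G on H there exists a unique u ∈ H such that a(u,v) = G(v) for all v ∈ H, and this solution satisfies ‖u‖ ≤ γ⁻¹ ‖G‖, where ‖G‖ is the operator norm of G. -/
/-!
Write `a` as a continuous linear map `A` from `H` to its conjugate dual and transport it by the
Riesz representation to an operator `T` on `H` with `a u v = ⟪v, T u⟫`. The inf-sup condition
says `γ ‖u‖ ≤ ‖T u‖`, so `T` is injective with closed range, and the transposed condition says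
that this range has trivial orthogonal complement. Hence `T`, and with it `A`, is bijective, and
the solution `u` of `A u = G` satisfies `γ ‖u‖ ≤ ‖A u‖ = ‖G‖`.
-/

open InnerProductSpace

section Hilbert

variable {𝕜 E : Type*} [RCLike 𝕜] [NormedAddCommGroup E] [InnerProductSpace 𝕜 E] [CompleteSpace E]

noncomputable def InnerProductSpace.conjDualRepr : (E →L⋆[𝕜] 𝕜) →ₗᵢ[𝕜] E :=
  (toDual 𝕜 E).symm.toLinearIsometry.comp
    ((starₗᵢ 𝕜).toLinearIsometry.postcomp (E := E) (σ₁₂ := starRingEnd 𝕜))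

theorem InnerProductSpace.inner_conjDualRepr (G : E →L⋆[𝕜] 𝕜) (v : E) :
    ⟪v, conjDualRepr G⟫_𝕜 = G v := by
  rw [← inner_conj_symm, conjDualRepr, LinearIsometry.coe_comp, Function.comp_apply,
    LinearIsometryEquiv.coe_toLinearIsometry, toDual_symm_apply]
  exact RCLike.conj_conj (G v)

theorem ContinuousLinearMap.surjective_of_antilipschitz_of_orthogonal_range_eq_bot
    {T : E →L[𝕜] E} {K : NNReal} (hT : AntilipschitzWith K T) (h : T.rangeᗮ = ⊥) :
    Function.Surjective T := by
  have hclosed : IsClosed (T.range : Set E) := hT.isClosed_range T.uniformContinuous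
  have := hclosed.completeSpace_coe
  exact LinearMap.range_eq_top.mp (Submodule.orthogonal_eq_bot_iff.mp h)

theorem ContinuousLinearMap.bijective_of_bounded_below_of_separating
    (A : E →L[𝕜] E →L⋆[𝕜] 𝕜) {γ : ℝ} (hγ : 0 < γ) (hA : ∀ u, γ * ‖u‖ ≤ ‖A u‖)
    (hsep : ∀ v, v ≠ 0 → ∃ u, A u v ≠ 0) : Function.Bijective A := by
  set T : E →L[𝕜] E := conjDualRepr.toContinuousLinearMap.comp A
  have hT : AntilipschitzWith (γ⁻¹).toNNReal T := by
    refine T.antilipschitz_of_bound fun u => ?_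
    rw [Real.coe_toNNReal _ (by positivity), inv_mul_eq_div, le_div_iff₀' hγ]
    simpa [T] using hA u
  have hrange : T.rangeᗮ = ⊥ := by
    refine (Submodule.eq_bot_iff _).mpr fun w hw => ?_
    by_contra hw0
    obtain ⟨u, hu⟩ := hsep w hw0
    have : ⟪w, T u⟫_𝕜 = 0 :=
      Submodule.inner_left_of_mem_orthogonal (LinearMap.mem_range_self _ u) hw
    exact hu (by simpa [T, inner_conjDualRepr] using this)
  refine ⟨hT.injective.of_comp (f := conjDualRepr), fun G => ?_⟩
  obtain ⟨u, hu⟩ :=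
    T.surjective_of_antilipschitz_of_orthogonal_range_eq_bot hT hrange (conjDualRepr G)
  exact ⟨u, conjDualRepr.injective hu⟩

end Hilbert

theorem iInf_iSup_norm_div_mul_norm_le {E F G : Type*} [NormedAddCommGroup E]
    [NormedAddCommGroup F] [SeminormedAddCommGroup G] (a : E → F → G) (u : E) {c : ℝ}
    (hc : 0 ≤ c) (h : ∀ v, ‖a u v‖ ≤ c * ‖v‖) :
    (⨅ u : {u : E // u ≠ 0}, ⨆ v : {v : F // v ≠ 0}, ‖a u v‖ / (‖(u : E)‖ * ‖(v : F)‖)) * ‖u‖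
      ≤ c := by
  rcases eq_or_ne u 0 with rfl | hu
  · simpa using hc
  have hu' : 0 < ‖u‖ := norm_pos_iff.mpr hu
  have hsup : ⨆ v : {v : F // v ≠ 0}, ‖a u v‖ / (‖u‖ * ‖(v : F)‖) ≤ c / ‖u‖ := by
    refine Real.iSup_le (fun v => ?_) (by positivity)
    have hv : 0 < ‖(v : F)‖ := norm_pos_iff.mpr v.2
    rw [mul_comm, ← div_div, div_le_div_iff_of_pos_right hu', div_le_iff₀ hv]
    exact h v
  have hbdd : BddBelow (Set.range fun u : {u : E // u ≠ 0} =>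
      ⨆ v : {v : F // v ≠ 0}, ‖a u v‖ / (‖(u : E)‖ * ‖(v : F)‖)) :=
    ⟨0, by rintro _ ⟨w, rfl⟩; exact Real.iSup_nonneg fun v => by positivity⟩
  rw [← le_div_iff₀ hu']
  exact (ciInf_le hbdd ⟨u, hu⟩).trans hsup

theorem generalized_lax_milgram_general
    {H : Type*} [NormedAddCommGroup H] [InnerProductSpace ℂ H] [CompleteSpace H]
    (a : H → H → ℂ)
    (ha_add₁ : ∀ u u' v : H, a (u + u') v = a u v + a u' v)
    (ha_smul₁ : ∀ (c : ℂ) (u v : H), a (c • u) v = c * a u v)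
    (ha_add₂ : ∀ u v v' : H, a u (v + v') = a u v + a u v')
    (ha_smul₂ : ∀ (u : H) (c : ℂ) (v : H), a u (c • v) = (starRingEnd ℂ) c * a u v)
    (M : ℝ)
    (ha_bdd : ∀ u v : H, ‖a u v‖ ≤ M * ‖u‖ * ‖v‖)
    (γ : ℝ)
    (hγ : γ = ⨅ u : {u : H // u ≠ 0}, ⨆ v : {v : H // v ≠ 0},
      ‖a u v‖ / (‖(u : H)‖ * ‖(v : H)‖))
    (hγ_pos : 0 < γ)
    (h_transposed : ∀ v : H, v ≠ 0 → ∃ u : H, a u v ≠ 0)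
    (G : H →SL[starRingEnd ℂ] ℂ) :
    (∃! u : H, ∀ v : H, a u v = G v) ∧
      ∀ u : H, (∀ v : H, a u v = G v) → ‖u‖ ≤ γ⁻¹ * ‖G‖ := by
  set A : H →L[ℂ] H →L⋆[ℂ] ℂ :=
    (LinearMap.mk₂'ₛₗ (RingHom.id ℂ) (starRingEnd ℂ) a ha_add₁ ha_smul₁ ha_add₂
      fun c u v => ha_smul₂ u c v).mkContinuous₂ M ha_bdd
  have hA_below (u : H) : γ * ‖u‖ ≤ ‖A u‖ := by
    rw [hγ]
    exact iInf_iSup_norm_div_mul_norm_le a u (norm_nonneg _) (A u).le_opNorm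
  have hA : Function.Bijective A :=
    A.bijective_of_bounded_below_of_separating hγ_pos hA_below h_transposed
  have hsol (u : H) : (∀ v, a u v = G v) ↔ A u = G := by
    rw [ContinuousLinearMap.ext_iff]; rfl
  refine ⟨by simpa only [hsol] using hA.existsUnique G, fun u hu => ?_⟩
  rw [le_inv_mul_iff₀ hγ_pos, ← (hsol u).mp hu]
  exact hA_below u

/-- **Generalized Lax–Milgram (Babuška) theorem.**
Let `H` be a complex Hilbert space and `a : H × H → ℂ` a bounded sesquilinear form
(linear in the first argument, conjugate-linear in the second) satisfying the inf-sup
condition with constant `γ > 0` and the transposed inf-sup condition.  Then for every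
bounded conjugate-linear functional `G` on `H` there is a unique `u ∈ H` with
`a(u,v) = G(v)` for all `v`, and this solution satisfies `‖u‖ ≤ γ⁻¹ ‖G‖`. -/
theorem generalized_lax_milgram
    {H : Type*} [NormedAddCommGroup H] [InnerProductSpace ℂ H] [CompleteSpace H]
    (a : H → H → ℂ)
    (ha_add₁ : ∀ u u' v : H, a (u + u') v = a u v + a u' v)
    (ha_smul₁ : ∀ (c : ℂ) (u v : H), a (c • u) v = c * a u v)
    (ha_add₂ : ∀ u v v' : H, a u (v + v') = a u v + a u v')
    (ha_smul₂ : ∀ (u : H) (c : ℂ) (v : H), a u (c • v) = (starRingEnd ℂ) c * a u v)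
    (M : ℝ) (hM : 0 < M)
    (ha_bdd : ∀ u v : H, ‖a u v‖ ≤ M * ‖u‖ * ‖v‖)
    (γ : ℝ)
    (hγ : γ = ⨅ u : {u : H // u ≠ 0}, ⨆ v : {v : H // v ≠ 0},
      ‖a u v‖ / (‖(u : H)‖ * ‖(v : H)‖))
    (hγ_pos : 0 < γ)
    (h_transposed : ∀ v : H, v ≠ 0 → ∃ u : H, a u v ≠ 0)
    (G : H →SL[starRingEnd ℂ] ℂ) :
    (∃! u : H, ∀ v : H, a u v = G v) ∧
      ∀ u : H, (∀ v : H, a u v = G v) → ‖u‖ ≤ γ⁻¹ * ‖G‖ :=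
  generalized_lax_milgram_general a ha_add₁ ha_smul₁ ha_add₂ ha_smul₂ M ha_bdd γ hγ hγ_pos
    h_transposed G
end

section
/- Sign properties of the Dirichlet-to-Neumann quadratic form: for every Schwartz function φ : ℝ → ℂ, Re(∫_ℝ conj(φ(x)) (T_k φ)(x) dx) ≤ 0 and Im(∫_ℝ conj(φ(x)) (T_k φ)(x) dx) ≥ 0. -/
open MeasureTheory

/-- The branch of the complex square root used for the upper half plane:
`ρ(w) := √((|w| + Re w)/2) + i √((|w| − Re w)/2)`; for `Im w ≥ 0` it satisfies
`ρ(w)² = w`, `Re ρ(w) ≥ 0` and `Im ρ(w) ≥ 0`. -/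
noncomputable def rho (w : ℂ) : ℂ :=
  (Real.sqrt ((‖w‖ + w.re) / 2) : ℝ) +
    Complex.I * (Real.sqrt ((‖w‖ - w.re) / 2) : ℝ)

/-- The Fourier transform `φ̂(ξ) = (2π)^{−1/2} ∫ e^{−ixξ} φ(x) dx` of a Schwartz function. -/
noncomputable def ft (φ : SchwartzMap ℝ ℂ) (ξ : ℝ) : ℂ :=
  ((Real.sqrt (2 * Real.pi) : ℝ) : ℂ)⁻¹ *
    ∫ x : ℝ, Complex.exp (-Complex.I * x * ξ) * φ x

/-- The Dirichlet-to-Neumann operator on Schwartz functions: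
`(T_k φ)(x) = (2π)^{−1/2} ∫ i ρ(k²−ξ²) e^{ixξ} φ̂(ξ) dξ`. -/
noncomputable def dtn (k : ℂ) (φ : SchwartzMap ℝ ℂ) (x : ℝ) : ℂ :=
  ((Real.sqrt (2 * Real.pi) : ℝ) : ℂ)⁻¹ *
    ∫ ξ : ℝ, Complex.I * rho (k ^ 2 - (ξ : ℂ) ^ 2) * Complex.exp (Complex.I * x * ξ) * ft φ ξ

/-
By Fubini, `∫ conj(φ) T_k φ = ∫ i ρ(k² − ξ²) |φ̂(ξ)|² dξ`: the quadratic form is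
diagonal on the Fourier side. Since `Re (i ρ) = −Im ρ ≤ 0` and `Im (i ρ) = Re ρ ≥ 0` pointwise,
both signs pass to the integral.
-/

open Complex ComplexConjugate SchwartzMap FourierTransform

lemma rho_re (w : ℂ) : (rho w).re = √((‖w‖ + w.re) / 2) := by simp [rho]

lemma rho_im (w : ℂ) : (rho w).im = √((‖w‖ - w.re) / 2) := by simp [rho]

lemma rho_re_nonneg (w : ℂ) : 0 ≤ (rho w).re := by rw [rho_re]; positivity

lemma rho_im_nonneg (w : ℂ) : 0 ≤ (rho w).im := by rw [rho_im]; positivity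

@[fun_prop]
lemma continuous_rho : Continuous rho := by unfold rho; fun_prop

lemma norm_rho (w : ℂ) : ‖rho w‖ = √‖w‖ := by
  have hre := abs_le.mp (abs_re_le_norm w)
  rw [← Real.sqrt_sq (norm_nonneg (rho w)), Complex.sq_norm, normSq_apply, rho_re, rho_im,
    ← sq, ← sq, Real.sq_sqrt (by linarith), Real.sq_sqrt (by linarith)]
  ring_nf

lemma norm_rho_sub_sq_le (k : ℂ) (ξ : ℝ) : ‖rho (k ^ 2 - (ξ : ℂ) ^ 2)‖ ≤ ‖k‖ + |ξ| := by
  have h : ‖k ^ 2 - (ξ : ℂ) ^ 2‖ ≤ (‖k‖ + |ξ|) ^ 2 :=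
    calc ‖k ^ 2 - (ξ : ℂ) ^ 2‖ ≤ ‖k‖ ^ 2 + |ξ| ^ 2 := (norm_sub_le _ _).trans_eq (by simp)
      _ ≤ (‖k‖ + |ξ|) ^ 2 := by nlinarith [mul_nonneg (norm_nonneg k) (abs_nonneg ξ)]
  rw [norm_rho]
  exact (Real.sqrt_le_left (by positivity)).mpr h

/-- Mathlib's `𝓕` has kernel `e^{-2πixξ}`, so `ft φ ξ = (2π)^{-1/2} 𝓕 φ (ξ / 2π)`. -/
noncomputable def ftSchwartz (φ : 𝓢(ℝ, ℂ)) : 𝓢(ℝ, ℂ) :=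
  ((√(2 * Real.pi) : ℂ)⁻¹) • compCLMOfContinuousLinearEquiv ℂ
    (ContinuousLinearEquiv.unitsEquivAut ℝ (Units.mk0 (2 * Real.pi)⁻¹ (by positivity))) (𝓕 φ)

lemma coe_ftSchwartz (φ : 𝓢(ℝ, ℂ)) : ⇑(ftSchwartz φ) = ft φ := by
  ext ξ
  simp only [ftSchwartz, ft, smul_apply, compCLMOfContinuousLinearEquiv_apply,
    Function.comp_apply, ContinuousLinearEquiv.unitsEquivAut_apply, Units.val_mk0, fourier_coe,
    Real.fourier_real_eq_integral_exp_smul, smul_eq_mul]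
  congr 2 with x
  congr 2
  push_cast
  field_simp

lemma integral_conj_mul_integral_exp_mul {f g : ℝ → ℂ} (hf : Integrable f) (hg : Integrable g) :
    ∫ x : ℝ, conj (f x) * ∫ ξ : ℝ, exp (I * x * ξ) * g ξ =
      ∫ ξ : ℝ, conj (∫ x : ℝ, exp (-I * x * ξ) * f x) * g ξ := by
  have hint : Integrable (fun p : ℝ × ℝ => conj (f p.1) * (exp (I * p.1 * p.2) * g p.2))
      (volume.prod volume) := by
    refine (hf.norm.mul_prod hg.norm).mono' ?_ (.of_forall fun p => ?_)
    · have hf' := hf.aestronglyMeasurable.comp_fst (ν := (volume : Measure ℝ))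
      have hg' := hg.aestronglyMeasurable.comp_snd (μ := (volume : Measure ℝ))
      have hexp : Continuous fun p : ℝ × ℝ => exp (I * p.1 * p.2) := by fun_prop
      exact (continuous_conj.comp_aestronglyMeasurable hf').mul
        (hexp.aestronglyMeasurable.mul hg')
    · simp [norm_exp]
  calc ∫ x : ℝ, conj (f x) * ∫ ξ : ℝ, exp (I * x * ξ) * g ξ
      = ∫ x : ℝ, ∫ ξ : ℝ, conj (f x) * (exp (I * x * ξ) * g ξ) := by
        simp_rw [integral_const_mul]
    _ = ∫ ξ : ℝ, ∫ x : ℝ, conj (f x) * (exp (I * x * ξ) * g ξ) := integral_integral_swap hint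
    _ = ∫ ξ : ℝ, conj (∫ x : ℝ, exp (-I * x * ξ) * f x) * g ξ := by
      congr 1 with ξ
      rw [← integral_conj, ← integral_mul_const]
      congr 1 with x
      rw [map_mul, ← exp_conj]
      simp only [neg_mul, map_neg, map_mul, conj_I, conj_ofReal, neg_neg]
      ring

lemma re_integral_nonpos {α : Type*} [MeasurableSpace α] {μ : Measure α} {F : α → ℂ}
    (hF : ∀ x, (F x).re ≤ 0) : (∫ x, F x ∂μ).re ≤ 0 := by
  by_cases hint : Integrable F μ
  · rw [← RCLike.re_eq_complex_re, ← integral_re hint]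
    exact integral_nonpos hF
  · simp [integral_undef hint]

lemma im_integral_nonneg {α : Type*} [MeasurableSpace α] {μ : Measure α} {F : α → ℂ}
    (hF : ∀ x, 0 ≤ (F x).im) : 0 ≤ (∫ x, F x ∂μ).im := by
  by_cases hint : Integrable F μ
  · rw [← RCLike.im_eq_complex_im, ← integral_im hint]
    exact integral_nonneg hF
  · simp [integral_undef hint]

lemma integrable_I_mul_rho_mul_ft (k : ℂ) (φ : 𝓢(ℝ, ℂ)) :
    Integrable fun ξ : ℝ => I * rho (k ^ 2 - (ξ : ℂ) ^ 2) * ft φ ξ := by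
  set ψ := ftSchwartz φ
  rw [← coe_ftSchwartz]
  refine ((ψ.integrable.norm.const_mul ‖k‖).add (ψ.integrable_pow_mul volume 1)).mono'
    (by fun_prop) (.of_forall fun ξ => ?_)
  calc ‖I * rho (k ^ 2 - (ξ : ℂ) ^ 2) * ψ ξ‖ = ‖rho (k ^ 2 - (ξ : ℂ) ^ 2)‖ * ‖ψ ξ‖ := by simp
    _ ≤ (‖k‖ + |ξ|) * ‖ψ ξ‖ := by gcongr; exact norm_rho_sub_sq_le k ξ
    _ = ‖k‖ * ‖ψ ξ‖ + ‖ξ‖ ^ 1 * ‖ψ ξ‖ := by rw [pow_one, Real.norm_eq_abs, add_mul]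

lemma integral_conj_mul_dtn (k : ℂ) (φ : 𝓢(ℝ, ℂ)) :
    ∫ x : ℝ, conj (φ x) * dtn k φ x =
      ∫ ξ : ℝ, ‖ft φ ξ‖ ^ 2 • (I * rho (k ^ 2 - (ξ : ℂ) ^ 2)) := by
  set c : ℂ := ((√(2 * Real.pi) : ℝ) : ℂ)⁻¹
  calc ∫ x : ℝ, conj (φ x) * dtn k φ x
      = c * ∫ x : ℝ, conj (φ x) *
          ∫ ξ : ℝ, exp (I * x * ξ) * (I * rho (k ^ 2 - (ξ : ℂ) ^ 2) * ft φ ξ) := by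
        rw [← integral_const_mul]
        congr 1 with x
        rw [dtn, mul_left_comm]
        congr 3 with ξ
        ring
    _ = c * ∫ ξ : ℝ, conj (∫ x : ℝ, exp (-I * x * ξ) * φ x) *
          (I * rho (k ^ 2 - (ξ : ℂ) ^ 2) * ft φ ξ) := by
        rw [integral_conj_mul_integral_exp_mul φ.integrable (integrable_I_mul_rho_mul_ft k φ)]
    _ = ∫ ξ : ℝ, conj (ft φ ξ) * (I * rho (k ^ 2 - (ξ : ℂ) ^ 2) * ft φ ξ) := by
        rw [← integral_const_mul]
        congr 1 with ξ
        simp only [ft, c, map_mul, map_inv₀, conj_ofReal]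
        ring
    _ = ∫ ξ : ℝ, ‖ft φ ξ‖ ^ 2 • (I * rho (k ^ 2 - (ξ : ℂ) ^ 2)) := by
        congr 1 with ξ
        rw [real_smul, ofReal_pow, ← mul_conj']
        ring

theorem dtn_sign_general (k : ℂ) (φ : SchwartzMap ℝ ℂ) :
    (∫ x : ℝ, (starRingEnd ℂ) (φ x) * dtn k φ x).re ≤ 0 ∧
      0 ≤ (∫ x : ℝ, (starRingEnd ℂ) (φ x) * dtn k φ x).im := by
  rw [integral_conj_mul_dtn]
  constructor
  · refine re_integral_nonpos fun ξ => ?_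
    rw [smul_re, I_mul_re]
    exact mul_nonpos_of_nonneg_of_nonpos (by positivity) (neg_nonpos.mpr (rho_im_nonneg _))
  · refine im_integral_nonneg fun ξ => ?_
    rw [smul_im, I_mul_im]
    exact mul_nonneg (by positivity) (rho_re_nonneg _)

/-- Sign properties of the Dirichlet-to-Neumann quadratic form: for every Schwartz
function `φ`, `Re ∫ conj(φ) T_k φ ≤ 0` and `Im ∫ conj(φ) T_k φ ≥ 0`. -/
theorem dtn_sign (k : ℂ) (hk : 0 ≤ (k ^ 2).im) (φ : SchwartzMap ℝ ℂ) :
    (∫ x : ℝ, (starRingEnd ℂ) (φ x) * dtn k φ x).re ≤ 0 ∧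
      0 ≤ (∫ x : ℝ, (starRingEnd ℂ) (φ x) * dtn k φ x).im :=
  dtn_sign_general k φ
end

section
/- Poincaré-type inequality on the strip above a rough surface: ∫_ℝ ∫_{f(x₁)}^{h} |u(x₁, x₂)|² dx₂ dx₁ ≤ 2h ∫_ℝ |u(x₁, f(x₁))|² dx₁ + 2h² ∫_ℝ ∫_{f(x₁)}^{h} |∂u/∂x₂ (x₁, x₂)|² dx₂ dx₁, where the inequality is asserted with values in [0, ∞]. -/
/-!
On each vertical fibre `t ↦ u (x₁, t)`, the fundamental theorem of calculus followed by
Cauchy–Schwarz gives `|u(x₁,x₂)|² ≤ 2 |u(x₁,f(x₁))|² + 2 (h - f(x₁)) ∫ |∂₂u(x₁,·)|²`.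
Integrating over `x₂ ∈ (f(x₁), h)`, bounding `h - f(x₁)` by `h`, and then integrating over `x₁`
gives the inequality.
-/

open MeasureTheory Set
open scoped ENNReal

namespace ENNReal

theorem add_sq_le_two_mul_add_sq (a b : ℝ≥0∞) : (a + b) ^ 2 ≤ 2 * (a ^ 2 + b ^ 2) := by
  have := rpow_add_le_mul_rpow_add_rpow a b one_le_two
  norm_num [rpow_two] at this
  exact this

theorem lintegral_sq_le_measure_univ_mul {α : Type*} [MeasurableSpace α] (μ : Measure α)
    {f : α → ℝ≥0∞} (hf : AEMeasurable f μ) :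
    (∫⁻ x, f x ∂μ) ^ 2 ≤ μ univ * ∫⁻ x, f x ^ 2 ∂μ := by
  have holder := lintegral_mul_le_Lp_mul_Lq μ .two_two aemeasurable_const hf (f := 1)
  rw [← mul_rpow_of_nonneg _ _ (by norm_num), one_div, le_rpow_inv_iff two_pos] at holder
  simpa [rpow_two] using holder

end ENNReal

section ContDiffOnIcc

variable {E : Type*} [NormedAddCommGroup E] [NormedSpace ℝ E] [CompleteSpace E]
  {g : ℝ → E} {a b : ℝ}

theorem enorm_sq_le_of_contDiffOn_Icc (hg : ContDiffOn ℝ 1 g (Icc a b)) {x : ℝ}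
    (hx : x ∈ Icc a b) :
    ‖g x‖ₑ ^ 2 ≤
      2 * (‖g a‖ₑ ^ 2 + ENNReal.ofReal (b - a) * ∫⁻ y in Icc a b, ‖deriv g y‖ₑ ^ 2) := by
  have fundamental : ‖g x‖ₑ ≤ ‖g a‖ₑ + ∫⁻ y in Icc a x, ‖deriv g y‖ₑ := by
    grw [show g x = g a + (g x - g a) by abel, enorm_add_le,
      enorm_sub_le_lintegral_deriv_of_contDiffOn_Icc (hg.mono (Icc_subset_Icc_right hx.2)) hx.1]
  have cauchySchwarz : (∫⁻ y in Icc a x, ‖deriv g y‖ₑ) ^ 2 ≤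
      ENNReal.ofReal (b - a) * ∫⁻ y in Icc a b, ‖deriv g y‖ₑ ^ 2 := by
    grw [ENNReal.lintegral_sq_le_measure_univ_mul _ (aestronglyMeasurable_deriv g _).enorm,
      Measure.restrict_apply_univ, Real.volume_Icc, Icc_subset_Icc_right hx.2, hx.2]
  grw [fundamental, ENNReal.add_sq_le_two_mul_add_sq, cauchySchwarz]

theorem setLIntegral_Ioo_enorm_sq_le_of_contDiffOn_Icc (hg : ContDiffOn ℝ 1 g (Icc a b))
    (hab : a ≤ b) :
    ∫⁻ x in Ioo a b, ‖g x‖ₑ ^ 2 ≤ ENNReal.ofReal (2 * (b - a)) * ‖g a‖ₑ ^ 2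
      + ENNReal.ofReal (2 * (b - a) ^ 2) * ∫⁻ x in Ioo a b, ‖deriv g x‖ₑ ^ 2 := by
  rw [restrict_Ioo_eq_restrict_Icc]
  calc ∫⁻ x in Icc a b, ‖g x‖ₑ ^ 2
      ≤ ∫⁻ _ in Icc a b, 2 * (‖g a‖ₑ ^ 2
          + ENNReal.ofReal (b - a) * ∫⁻ y in Icc a b, ‖deriv g y‖ₑ ^ 2) :=
        setLIntegral_mono' measurableSet_Icc fun x hx => enorm_sq_le_of_contDiffOn_Icc hg hx
    _ = _ := by
        rw [setLIntegral_const, Real.volume_Icc, ENNReal.ofReal_mul zero_le_two,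
          ENNReal.ofReal_mul zero_le_two, ENNReal.ofReal_pow (sub_nonneg.2 hab),
          ENNReal.ofReal_ofNat]
        ring

end ContDiffOnIcc

theorem strip_poincare_general (h : ℝ) (f : ℝ → ℝ) (hf : Continuous f)
    (fplus : ℝ) (hf0 : ∀ x₁ : ℝ, 0 ≤ f x₁) (hfp : ∀ x₁ : ℝ, f x₁ ≤ fplus)
    (hfph : fplus < h) (u : ℝ × ℝ → ℂ) (hu : ContDiff ℝ 1 u) :
    (∫⁻ x₁ : ℝ, ∫⁻ x₂ in Set.Ioo (f x₁) h, (‖u (x₁, x₂)‖₊ : ℝ≥0∞) ^ 2)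
      ≤ ENNReal.ofReal (2 * h) * (∫⁻ x₁ : ℝ, (‖u (x₁, f x₁)‖₊ : ℝ≥0∞) ^ 2)
        + ENNReal.ofReal (2 * h ^ 2) *
          ∫⁻ x₁ : ℝ, ∫⁻ x₂ in Set.Ioo (f x₁) h,
            (‖deriv (fun t : ℝ => u (x₁, t)) x₂‖₊ : ℝ≥0∞) ^ 2 := by
  have fiberwise (x₁ : ℝ) :
      ∫⁻ x₂ in Ioo (f x₁) h, ‖u (x₁, x₂)‖ₑ ^ 2
        ≤ ENNReal.ofReal (2 * h) * ‖u (x₁, f x₁)‖ₑ ^ 2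
          + ENNReal.ofReal (2 * h ^ 2) *
            ∫⁻ x₂ in Ioo (f x₁) h, ‖deriv (fun t => u (x₁, t)) x₂‖ₑ ^ 2 := by
    refine (setLIntegral_Ioo_enorm_sq_le_of_contDiffOn_Icc (g := fun t => u (x₁, t))
      (hu.comp (contDiff_const.prodMk contDiff_id)).contDiffOn
      ((hfp x₁).trans hfph.le)).trans ?_
    gcongr <;> linarith [hf0 x₁, hfp x₁]
  have hboundary : Measurable fun x₁ => ‖u (x₁, f x₁)‖ₑ ^ 2 :=
    (hu.continuous.comp (continuous_id.prodMk hf)).measurable.enorm.pow_const 2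
  simp only [← enorm_eq_nnnorm]
  grw [lintegral_mono fiberwise, lintegral_add_left (hboundary.const_mul _),
    lintegral_const_mul' _ _ ENNReal.ofReal_ne_top,
    lintegral_const_mul' _ _ ENNReal.ofReal_ne_top]

/-- Poincaré-type inequality on the strip above a rough surface: if `0 < h`, `f : ℝ → ℝ`
is continuous with `0 ≤ f(x₁) ≤ f₊ < h`, and `u : ℝ² → ℂ` is continuously differentiable,
then (with values in `[0,∞]`)
`∫∫_{f(x₁)<x₂<h} |u|² ≤ 2h ∫ |u(x₁,f(x₁))|² dx₁ + 2h² ∫∫_{f(x₁)<x₂<h} |∂u/∂x₂|²`. -/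
theorem strip_poincare (h : ℝ) (hh : 0 < h) (f : ℝ → ℝ) (hf : Continuous f)
    (fplus : ℝ) (hf0 : ∀ x₁ : ℝ, 0 ≤ f x₁) (hfp : ∀ x₁ : ℝ, f x₁ ≤ fplus)
    (hfph : fplus < h) (u : ℝ × ℝ → ℂ) (hu : ContDiff ℝ 1 u) :
    (∫⁻ x₁ : ℝ, ∫⁻ x₂ in Set.Ioo (f x₁) h, (‖u (x₁, x₂)‖₊ : ℝ≥0∞) ^ 2)
      ≤ ENNReal.ofReal (2 * h) * (∫⁻ x₁ : ℝ, (‖u (x₁, f x₁)‖₊ : ℝ≥0∞) ^ 2)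
        + ENNReal.ofReal (2 * h ^ 2) *
          ∫⁻ x₁ : ℝ, ∫⁻ x₂ in Set.Ioo (f x₁) h,
            (‖deriv (fun t : ℝ => u (x₁, t)) x₂‖₊ : ℝ≥0∞) ^ 2 :=
  strip_poincare_general h f hf fplus hf0 hfp hfph u hu
end
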